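/- Let C = {x, z} ∪ J be a partition of the set of alternatives of an election with voting profile V such that z ≥_{3/4} x and x ≥_{3/4} y for all y ∈ J. Then for every partition J = A ∪ B into pairwise disjoint linearly ordered sets with A nonempty, d³(A z x B, V) > d³(z x A B, V). -/

import Mathlib

open Finset

variable {α : Type}

/-- A ranking of the alternatives: a duplicate-free list containing every
alternative; earlier in the list means more preferred. -/
def IsRanking (l : List α) : Prop := l.Nodup ∧ ∀ a : α, a ∈ l

/-- The 3-wise Kendall tau distance between two rankings: the number of subsets
`S` with `|S| ≤ 3` on which the two rankings have different top elements. -/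
def d3 [Fintype α] [DecidableEq α] (l m : List α) : ℕ :=
  ((Finset.univ : Finset α).powerset.filter
    (fun S => S.card ≤ 3 ∧ ∃ a ∈ S, ∃ b ∈ S, a ≠ b ∧
      (∀ c ∈ S, l.idxOf a ≤ l.idxOf c) ∧ (∀ c ∈ S, m.idxOf b ≤ m.idxOf c))).card

/-- Total 3-wise Kendall tau distance from a ranking to a voting profile. -/
def d3V [Fintype α] [DecidableEq α] (l : List α) (V : Multiset (List α)) : ℕ :=
  (V.map (fun v => d3 l v)).sum

/-- A 3-wise median of the voting profile `V`. -/
def IsMedian3 [Fintype α] [DecidableEq α] (V : Multiset (List α)) (l : List α) : Prop :=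
  IsRanking l ∧ ∀ m : List α, IsRanking m → d3V l V ≤ d3V m V

/-- The 2-wise Kendall tau distance between two rankings: the number of
two-element subsets on which the relative orders differ. -/
def d2 [Fintype α] [DecidableEq α] (l m : List α) : ℕ :=
  ((Finset.univ : Finset α).powerset.filter
    (fun S => S.card = 2 ∧ ∃ a ∈ S, ∃ b ∈ S,
      l.idxOf a < l.idxOf b ∧ m.idxOf b < m.idxOf a)).card

/-- Total 2-wise Kendall tau distance from a ranking to a voting profile. -/
def d2V [Fintype α] [DecidableEq α] (l : List α) (V : Multiset (List α)) : ℕ :=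
  (V.map (fun v => d2 l v)).sum

/-- A 2-wise median of the voting profile `V`. -/
def IsMedian2 [Fintype α] [DecidableEq α] (V : Multiset (List α)) (l : List α) : Prop :=
  IsRanking l ∧ ∀ m : List α, IsRanking m → d2V l V ≤ d2V m V

/-- `x ≥ₛ y`: `x` is ranked before `y` in at least `s·|V|` votes. -/
def geq [DecidableEq α] (V : Multiset (List α)) (s : ℝ) (x y : α) : Prop :=
  s * (V.card : ℝ) ≤ (V.countP (fun v => v.idxOf x < v.idxOf y) : ℝ)

/-- `x` is a non-dirty alternative with respect to the threshold `s`. -/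
def NonDirty [DecidableEq α] (V : Multiset (List α)) (s : ℝ) (x : α) : Prop :=
  ∀ y : α, y ≠ x → geq V s x y ∨ geq V s y x

/-- The election satisfies the `3/4`-majority rule with respect to the 3-wise
Kemeny voting scheme. -/
def Satisfies34 [Fintype α] [DecidableEq α] (V : Multiset (List α)) : Prop :=
  ∀ x : α, NonDirty V (3/4) x → ∀ y : α, y ≠ x →
    (geq V (3/4) x y → ∀ π : List α, IsMedian3 V π → π.idxOf x < π.idxOf y) ∧
    (geq V (3/4) y x → ∀ π : List α, IsMedian3 V π → π.idxOf y < π.idxOf x)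

/-- `n_{xy}`: the number of votes ranking `x` before `y`. -/
def nn2 [DecidableEq α] (V : Multiset (List α)) (x y : α) : ℕ :=
  V.countP (fun v => v.idxOf x < v.idxOf y)

/-- `n_{xyz}`: the number of votes ranking `x` before `y` before `z`. -/
def nn3 [DecidableEq α] (V : Multiset (List α)) (x y z : α) : ℕ :=
  V.countP (fun v => v.idxOf x < v.idxOf y ∧ v.idxOf y < v.idxOf z)

/-- `n_{xyzt}`: the number of votes ranking `x` before `y` before `z` before `t`. -/
def nn4 [DecidableEq α] (V : Multiset (List α)) (x y z t : α) : ℕ :=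
  V.countP (fun v => v.idxOf x < v.idxOf y ∧ v.idxOf y < v.idxOf z ∧
    v.idxOf z < v.idxOf t)

/-- `δ_{xy} = n_{xy} - n_{yx}`. -/
def del [DecidableEq α] (V : Multiset (List α)) (x y : α) : ℤ :=
  (nn2 V x y : ℤ) - nn2 V y x

/-- `P_{x,y,z}`. -/
def Pq [DecidableEq α] (V : Multiset (List α)) (x y z : α) : ℤ :=
  3 * (nn3 V x z y : ℤ) + nn3 V x y z + nn3 V z x y + nn3 V z y x
    - 4 * nn3 V y z x - 2 * nn3 V y x z

/-- `Q_{x,y,z}`. -/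
def Qq [DecidableEq α] (V : Multiset (List α)) (x y z : α) : ℤ :=
  (nn3 V x y z : ℤ) + nn3 V x z y - nn3 V y x z - nn3 V y z x

/-- `R_{y,x,z,t}`. -/
def Rr [DecidableEq α] (V : Multiset (List α)) (y x z t : α) : ℤ :=
  2 * (nn4 V y z t x : ℤ) + 2 * nn4 V y z x t + nn4 V y t z x + nn4 V y t x z

/-- `S_{y,x,z,t} = R_{y,x,z,t} - R_{x,y,z,t}`. -/
def Ss [DecidableEq α] (V : Multiset (List α)) (y x z t : α) : ℤ :=
  Rr V y x z t - Rr V x y z t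

/-!
Moving `z x` in front of `A` changes the first element only of the sets `S` that meet `A` and
contain `z` or `x`: the first element `a` of `A` in `S` is replaced by `z`, or by `x` if `z ∉ S`.
Pair every `S` with its image under the transposition `(z x)`. Since `z` precedes `x`, and `x`
precedes every other alternative, in at least three quarters of the votes, union bounds over these
events show that on each such pair `z x A B` disagrees with at most as many votes as `A z x B`,
and with strictly fewer on the pair `{z, a}`, `{x, a}`.
-/

namespace Multiset

variable {β ι : Type*} {s : Multiset β} {p q : β → Prop} [DecidablePred p] [DecidablePred q]

theorem countP_le_countP_of_imp (h : ∀ b, p b → q b) : s.countP p ≤ s.countP q := by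
  simpa only [countP_eq_card_filter] using card_le_card (monotone_filter_right s h)

theorem countP_or_le : s.countP (fun b => p b ∨ q b) ≤ s.countP p + s.countP q := by
  have h := congrArg card (filter_add_filter p q s)
  simp only [card_add, ← countP_eq_card_filter] at h
  omega

theorem countP_exists_mem_le_sum (T : Finset ι) (r : ι → β → Prop)
    [∀ i, DecidablePred (r i)] :
    s.countP (fun b => ∃ i ∈ T, r i b) ≤ ∑ i ∈ T, s.countP (r i) := by
  classical
  induction T using Finset.induction_on with
  | empty => simp
  | insert i T hi ih =>
    rw [Finset.sum_insert hi]
    calc s.countP (fun b => ∃ j ∈ insert i T, r j b)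
        = s.countP (fun b => r i b ∨ ∃ j ∈ T, r j b) := by
          simp only [Finset.exists_mem_insert]
      _ ≤ _ := countP_or_le.trans (by omega)

end Multiset

theorem Finset.sum_lt_sum_of_involutive {ι M : Type*} [AddCommMonoid M] [LinearOrder M]
    [IsOrderedCancelAddMonoid M] {s : Finset ι} {σ : ι → ι} (hσ : Function.Involutive σ)
    (hs : ∀ i ∈ s, σ i ∈ s) {f g : ι → M} (hle : ∀ i ∈ s, f i + f (σ i) ≤ g i + g (σ i))
    (hlt : ∃ i ∈ s, f i + f (σ i) < g i + g (σ i)) :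
    ∑ i ∈ s, f i < ∑ i ∈ s, g i := by
  have hcomp (h : ι → M) : ∑ i ∈ s, h (σ i) = ∑ i ∈ s, h i :=
    Finset.sum_nbij' σ σ hs hs (fun i _ => hσ i) (fun i _ => hσ i) (fun _ _ => rfl)
  have h2 := Finset.sum_lt_sum hle hlt
  rw [Finset.sum_add_distrib, Finset.sum_add_distrib, hcomp, hcomp] at h2
  by_contra hge
  exact (add_le_add (not_lt.1 hge) (not_lt.1 hge)).not_gt h2

theorem Finset.map_swap_eq_insert_erase {β : Type*} [DecidableEq β] {z x : β} {S : Finset β}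
    (hz : z ∈ S) (hx : x ∉ S) :
    S.map (Equiv.swap z x).toEmbedding = insert x (S.erase z) := by
  ext c
  rw [Finset.mem_map_equiv, Equiv.symm_swap, Finset.mem_insert, Finset.mem_erase]
  rcases eq_or_ne c z with rfl | hcz
  · simp [hx, (ne_of_mem_of_not_mem hz hx)]
  rcases eq_or_ne c x with rfl | hcx
  · simp [hz]
  · simp [Equiv.swap_apply_of_ne_of_ne hcz hcx, hcx, hcz]

theorem Finset.map_swap_eq_self {β : Type*} [DecidableEq β] {z x : β} {S : Finset β}
    (h : z ∈ S ↔ x ∈ S) :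
    S.map (Equiv.swap z x).toEmbedding = S := by
  ext c
  rw [Finset.mem_map_equiv, Equiv.symm_swap]
  rcases eq_or_ne c z with rfl | hcz
  · simpa using h.symm
  rcases eq_or_ne c x with rfl | hcx
  · simpa using h
  · rw [Equiv.swap_apply_of_ne_of_ne hcz hcx]

section RanksFirst

variable [DecidableEq α]

def RanksFirst (l : List α) (S : Finset α) (t : α) : Prop :=
  t ∈ S ∧ ∀ c ∈ S, l.idxOf t ≤ l.idxOf c

instance (l : List α) (S : Finset α) (t : α) : Decidable (RanksFirst l S t) :=
  inferInstanceAs (Decidable (t ∈ S ∧ ∀ c ∈ S, l.idxOf t ≤ l.idxOf c))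

theorem RanksFirst.unique {l : List α} (hl : ∀ a, a ∈ l) {S : Finset α} {a b : α}
    (ha : RanksFirst l S a) (hb : RanksFirst l S b) : a = b :=
  (List.idxOf_inj (hl a)).1 (le_antisymm (ha.2 b hb.1) (hb.2 a ha.1))

theorem exists_ranksFirst (l : List α) {S : Finset α} (hS : S.Nonempty) :
    ∃ t, RanksFirst l S t := by
  obtain ⟨t, ht, hmin⟩ := S.exists_min_image l.idxOf hS
  exact ⟨t, ht, hmin⟩

theorem ranksFirst_iff_head?_filter {l : List α} {S : Finset α} {t : α} (ht : t ∈ l) :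
    RanksFirst l S t ↔ (l.filter (· ∈ S)).head? = some t := by
  induction l with
  | nil => simp at ht
  | cons y l ih =>
    by_cases hy : y ∈ S
    · simp only [List.filter_cons, hy, decide_true, if_true, List.head?_cons, Option.some.injEq]
      constructor
      · rintro ⟨-, hmin⟩
        by_contra hne
        have := hmin y hy
        rw [List.idxOf_cons_self, List.idxOf_cons_ne _ hne] at this
        omega
      · rintro rfl
        exact ⟨hy, fun c _ => by simp⟩
    · simp only [List.filter_cons, hy, decide_false, Bool.false_eq_true, if_false]
      by_cases hty : t = y
      · subst hty
        refine iff_of_false (fun h => hy h.1) fun h => hy ?_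
        exact (List.mem_filter.1 (List.mem_of_mem_head? h)).2 |> of_decide_eq_true
      · rw [← ih ((List.mem_cons.1 ht).resolve_left hty)]
        refine and_congr_right fun _ => forall₂_congr fun c hc => ?_
        have hcy : y ≠ c := fun h => hy (h ▸ hc)
        rw [List.idxOf_cons_ne _ (Ne.symm hty), List.idxOf_cons_ne _ hcy]
        exact Nat.succ_le_succ_iff

theorem ranksFirst_cons {l : List α} {S : Finset α} {t : α} (ht : t ∈ S) :
    RanksFirst (t :: l) S t :=
  ⟨ht, fun c _ => by simp⟩

theorem ranksFirst_cons_iff_of_notMem {l : List α} {S : Finset α} {y t : α} (hy : y ∉ S)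
    (ht : t ∈ l) : RanksFirst (y :: l) S t ↔ RanksFirst l S t := by
  rw [ranksFirst_iff_head?_filter (List.mem_cons_of_mem y ht), ranksFirst_iff_head?_filter ht,
    List.filter_cons_of_neg (by simpa using hy)]

theorem ranksFirst_append_of_head?_filter {A L : List α} {S : Finset α} {a : α}
    (h : (A.filter (· ∈ S)).head? = some a) : RanksFirst (A ++ L) S a := by
  have ha : a ∈ A := (List.mem_filter.1 (List.mem_of_mem_head? h)).1
  rw [ranksFirst_iff_head?_filter (List.mem_append_left L ha), List.filter_append,
    List.head?_append, h, Option.some_or]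

def DisagreeOnFirst (l m : List α) (S : Finset α) : Prop :=
  ∃ a ∈ S, ∃ b ∈ S, a ≠ b ∧ RanksFirst l S a ∧ RanksFirst m S b

instance (l m : List α) (S : Finset α) : Decidable (DisagreeOnFirst l m S) :=
  inferInstanceAs (Decidable (∃ a ∈ S, ∃ b ∈ S, a ≠ b ∧ RanksFirst l S a ∧ RanksFirst m S b))

theorem disagreeOnFirst_iff_not_ranksFirst {l m : List α} (hl : IsRanking l) (hm : IsRanking m)
    {S : Finset α} {t : α} (ht : RanksFirst l S t) :
    DisagreeOnFirst l m S ↔ ¬ RanksFirst m S t := by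
  constructor
  · rintro ⟨a, -, b, -, hab, ha, hb⟩ hmt
    exact hab ((ha.unique hl.2 ht).trans (hmt.unique hm.2 hb))
  · intro hmt
    obtain ⟨b, hb⟩ := exists_ranksFirst m ⟨t, ht.1⟩
    exact ⟨t, ht.1, b, hb.1, fun h => hmt (h ▸ hb), ht, hb⟩

theorem disagreeOnFirst_congr_left {l l' m : List α} (hl : ∀ a, a ∈ l) (hl' : ∀ a, a ∈ l')
    {S : Finset α} (h : l.filter (· ∈ S) = l'.filter (· ∈ S)) :
    DisagreeOnFirst l m S ↔ DisagreeOnFirst l' m S := by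
  simp only [DisagreeOnFirst, ranksFirst_iff_head?_filter (hl _),
    ranksFirst_iff_head?_filter (hl' _), h]

end RanksFirst

section Counts

variable [DecidableEq α]

def disagreeCount (l : List α) (V : Multiset (List α)) (S : Finset α) : ℕ :=
  V.countP (DisagreeOnFirst l · S)

def nonFirstCount (V : Multiset (List α)) (S : Finset α) (t : α) : ℕ :=
  V.countP (fun v => ¬ RanksFirst v S t)

theorem disagreeCount_eq_nonFirstCount {l : List α} {V : Multiset (List α)}
    (hl : IsRanking l)
    (hV : ∀ v ∈ V, IsRanking v) {S : Finset α} {t : α} (ht : RanksFirst l S t) :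
    disagreeCount l V S = nonFirstCount V S t :=
  Multiset.countP_congr rfl fun v hv =>
    propext (disagreeOnFirst_iff_not_ranksFirst hl (hV v hv) ht)

theorem disagreeCount_congr {l l' : List α} (hl : ∀ a, a ∈ l) (hl' : ∀ a, a ∈ l')
    {V : Multiset (List α)} {S : Finset α} (h : l.filter (· ∈ S) = l'.filter (· ∈ S)) :
    disagreeCount l V S = disagreeCount l' V S :=
  Multiset.countP_congr rfl fun _ _ => propext (disagreeOnFirst_congr_left hl hl' h)

theorem d3V_eq_sum [Fintype α] (l : List α) (V : Multiset (List α)) :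
    d3V l V =
      ∑ S ∈ (Finset.univ : Finset α).powerset.filter (·.card ≤ 3), disagreeCount l V S := by
  have hd3 (v : List α) :
      d3 l v = ∑ S ∈ (Finset.univ : Finset α).powerset.filter (·.card ≤ 3),
        if DisagreeOnFirst l v S then 1 else 0 := by
    rw [← Finset.card_filter, Finset.filter_filter, d3]
    congr 1
    refine Finset.filter_congr fun S _ => and_congr_right fun _ => ?_
    simp only [DisagreeOnFirst, RanksFirst]
    constructor
    · rintro ⟨a, ha, b, hb, hab, hla, hvb⟩
      exact ⟨a, ha, b, hb, hab, ⟨ha, hla⟩, hb, hvb⟩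
    · rintro ⟨a, ha, b, hb, hab, ⟨-, hla⟩, -, hvb⟩
      exact ⟨a, ha, b, hb, hab, hla, hvb⟩
  induction V using Multiset.induction with
  | empty => simp [d3V, disagreeCount]
  | cons v V ih =>
    simp only [d3V, Multiset.map_cons, Multiset.sum_cons] at ih ⊢
    rw [ih, hd3, ← Finset.sum_add_distrib]
    refine Finset.sum_congr rfl fun S _ => ?_
    simp only [disagreeCount, Multiset.countP_cons]
    omega

variable {V : Multiset (List α)}

theorem four_mul_nn2_le_of_geq {u w : α} (h : geq V (3/4) u w) : 4 * nn2 V w u ≤ V.card := by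
  have hsplit := Multiset.card_eq_countP_add_countP (fun v : List α => v.idxOf u < v.idxOf w) V
  have hwu : nn2 V w u ≤ V.countP (fun v => ¬ v.idxOf u < v.idxOf w) :=
    Multiset.countP_le_countP_of_imp fun v h => by omega
  have h4 : 3 * V.card ≤ 4 * V.countP (fun v => v.idxOf u < v.idxOf w) := by
    unfold geq at h
    exact_mod_cast (by linarith :
      (3 : ℝ) * V.card ≤ 4 * (V.countP (fun v => v.idxOf u < v.idxOf w) : ℝ))
  omega

theorem nn2_add_nn2 (hV : ∀ v ∈ V, IsRanking v) {u w : α} (huw : u ≠ w) :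
    nn2 V u w + nn2 V w u = V.card := by
  rw [Multiset.card_eq_countP_add_countP (fun v : List α => v.idxOf u < v.idxOf w) V, nn2, nn2]
  congr 1
  refine Multiset.countP_congr rfl fun v hv => propext ⟨fun h => by omega, fun h => ?_⟩
  have hne : v.idxOf u ≠ v.idxOf w := fun h => huw ((List.idxOf_inj ((hV v hv).2 u)).1 h)
  omega

theorem nn2_le_add (u y w : α) : nn2 V u w ≤ nn2 V u y + nn2 V y w :=
  (Multiset.countP_le_countP_of_imp fun v h => by omega).trans Multiset.countP_or_le

theorem nn2_le_nonFirstCount {S : Finset α} {c : α} (hc : c ∈ S) (t : α) :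
    nn2 V c t ≤ nonFirstCount V S t :=
  Multiset.countP_le_countP_of_imp fun v h ht => by have := ht.2 c hc; omega

theorem nonFirstCount_le_sum {S : Finset α} {t : α} (ht : t ∈ S) :
    nonFirstCount V S t ≤ ∑ c ∈ S.erase t, nn2 V c t := by
  refine (Multiset.countP_le_countP_of_imp fun v h => ?_).trans
    (Multiset.countP_exists_mem_le_sum _ _)
  obtain ⟨c, hc, hlt⟩ : ∃ c ∈ S, v.idxOf c < v.idxOf t := by
    simpa [RanksFirst, ht] using h
  exact ⟨c, Finset.mem_erase.2 ⟨fun h => (h ▸ hlt).false, hc⟩, hlt⟩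

theorem nonFirstCount_le_add {S : Finset α} {z : α} (hz : z ∈ S) (x : α) :
    nonFirstCount V S z ≤ nn2 V x z + nonFirstCount V (insert x (S.erase z)) x := by
  refine (Multiset.countP_le_countP_of_imp fun v h => ?_).trans Multiset.countP_or_le
  by_contra! hv
  obtain ⟨hzx, hx⟩ := hv
  refine h ⟨hz, fun c hc => ?_⟩
  by_cases hcz : c = z
  · exact hcz ▸ le_rfl
  · have := hx.2 c (Finset.mem_insert_of_mem (Finset.mem_erase.2 ⟨hcz, hc⟩))
    omega

theorem four_mul_sum_nn2_le {T : Finset α} {x : α} (h : ∀ c ∈ T, 4 * nn2 V c x ≤ V.card) :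
    4 * ∑ c ∈ T, nn2 V c x ≤ T.card * V.card := by
  rw [Finset.mul_sum]
  simpa using Finset.sum_le_card_nsmul T _ _ h

end Counts

section Estimates

variable [DecidableEq α] {V : Multiset (List α)} {S : Finset α} {z x a : α}

theorem nonFirstCount_le_of_mem_of_mem (hV : ∀ v ∈ V, IsRanking v)
    (hxz : 4 * nn2 V x z ≤ V.card) (hJ : ∀ c ∈ S, c ≠ z → c ≠ x → 4 * nn2 V c x ≤ V.card)
    (hS : S.card ≤ 3) (hzS : z ∈ S) (hxS : x ∈ S) (hzx : z ≠ x) (haS : a ∈ S) (haz : a ≠ z)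
    (hax : a ≠ x) :
    nonFirstCount V S z ≤ nonFirstCount V S a := by
  have hxS' : x ∈ S.erase z := Finset.mem_erase.2 ⟨hzx.symm, hxS⟩
  have hz := nonFirstCount_le_add (V := V) hzS x
  rw [Finset.insert_eq_of_mem hxS'] at hz
  have hx := nonFirstCount_le_sum (V := V) hxS'
  have hsum := four_mul_sum_nn2_le (V := V) (T := (S.erase z).erase x) fun c hc => by
    simp only [Finset.mem_erase] at hc
    exact hJ c hc.2.2 hc.2.1 hc.1
  have hcard : ((S.erase z).erase x).card ≤ 1 := by
    rw [Finset.card_erase_of_mem hxS', Finset.card_erase_of_mem hzS]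
    omega
  have ha := nn2_le_nonFirstCount (V := V) hxS a
  have hcompl := nn2_add_nn2 hV hax
  have hJa := hJ a haS haz hax
  have := Nat.mul_le_mul_right V.card hcard
  omega

-- The slack `(3 - #S) * |V|` makes the bound strict for `S = {z, a}`.
theorem two_mul_nonFirstCount_add_le (hV : ∀ v ∈ V, IsRanking v)
    (hxz : 4 * nn2 V x z ≤ V.card) (hJ : ∀ c ∈ S, c ≠ z → 4 * nn2 V c x ≤ V.card)
    (hS : S.card ≤ 3) (hzS : z ∈ S) (hxS : x ∉ S) (haS : a ∈ S) (haz : a ≠ z) :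
    2 * (nonFirstCount V S z + nonFirstCount V (insert x (S.erase z)) x)
        + (3 - S.card) * V.card
      ≤ 2 * (nonFirstCount V S a + nonFirstCount V (insert x (S.erase z)) a) := by
  have hxS' : x ∉ S.erase z := fun h => hxS (Finset.mem_of_mem_erase h)
  have hz := nonFirstCount_le_add (V := V) hzS x
  have hx := nonFirstCount_le_sum (V := V) (Finset.mem_insert_self x (S.erase z))
  rw [Finset.erase_insert hxS'] at hx
  have hsum := four_mul_sum_nn2_le (V := V) (T := S.erase z) (x := x) fun c hc =>
    hJ c (Finset.mem_of_mem_erase hc) (Finset.ne_of_mem_erase hc)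
  have hcard : (S.erase z).card = S.card - 1 := Finset.card_erase_of_mem hzS
  have hcard2 : 2 ≤ S.card := by
    calc 2 = ({z, a} : Finset α).card := (Finset.card_pair haz.symm).symm
      _ ≤ S.card := Finset.card_le_card (Finset.insert_subset hzS (by simpa using haS))
  have haz' := nn2_le_nonFirstCount (V := V) hzS a
  have hax' := nn2_le_nonFirstCount (V := V) (Finset.mem_insert_self x (S.erase z)) a
  have hcz := nn2_add_nn2 hV haz
  have hcx := nn2_add_nn2 hV (fun h : a = x => hxS (h ▸ haS))
  have htrans := nn2_le_add (V := V) a x z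
  have hJa := hJ a haS haz
  obtain h | h : S.card = 2 ∨ S.card = 3 := by omega
  all_goals rw [h] at hcard ⊢; rw [hcard] at hsum; omega

end Estimates

section Profile

variable {z x : α} {A B : List α}

theorem IsRanking.cons_cons_append (h : IsRanking (A ++ z :: x :: B)) :
    IsRanking (z :: x :: (A ++ B)) := by
  have hperm : (A ++ z :: x :: B).Perm (z :: x :: (A ++ B)) := by
    simpa using (List.perm_append_comm (l₁ := A) (l₂ := [z, x])).append_right B
  exact ⟨hperm.nodup_iff.1 h.1, fun a => hperm.mem_iff.1 (h.2 a)⟩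

theorem IsRanking.notMem_prefix (h : IsRanking (A ++ z :: x :: B)) :
    z ∉ A ∧ x ∉ A ∧ z ≠ x := by
  have hnd := h.1
  simp only [List.nodup_append, List.nodup_cons, List.mem_cons] at hnd
  refine ⟨fun hz => ?_, fun hx => ?_, fun hzx => hnd.2.1.1 (Or.inl hzx)⟩
  · exact hnd.2.2 z hz z (by simp) rfl
  · exact hnd.2.2 x hx x (by simp) rfl

theorem filter_cons_cons_append_of_filter_eq_nil {p : α → Bool} (h : A.filter p = []) :
    (z :: x :: (A ++ B)).filter p = (A ++ z :: x :: B).filter p := by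
  simp [List.filter_cons, List.filter_append, h]

theorem filter_cons_cons_append_of_false {p : α → Bool} (hz : p z = false) (hx : p x = false) :
    (z :: x :: (A ++ B)).filter p = (A ++ z :: x :: B).filter p := by
  simp [List.filter_append, hz, hx]

variable [DecidableEq α] {V : Multiset (List α)} {S : Finset α}

theorem two_mul_disagreeCount_add_le (hV : ∀ v ∈ V, IsRanking v)
    (hrank : IsRanking (A ++ z :: x :: B)) (hxz : 4 * nn2 V x z ≤ V.card)
    (hxJ : ∀ c, c ≠ x → c ≠ z → 4 * nn2 V c x ≤ V.card)
    (hS : S.card ≤ 3) (hzS : z ∈ S) (hxS : x ∉ S) {a : α}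
    (ha : (A.filter (· ∈ S)).head? = some a) :
    2 * (disagreeCount (z :: x :: (A ++ B)) V S
        + disagreeCount (z :: x :: (A ++ B)) V (insert x (S.erase z)))
        + (3 - S.card) * V.card
      ≤ 2 * (disagreeCount (A ++ z :: x :: B) V S
        + disagreeCount (A ++ z :: x :: B) V (insert x (S.erase z))) := by
  obtain ⟨hzA, hxA, hzx⟩ := hrank.notMem_prefix
  obtain ⟨haA, haS⟩ := List.mem_filter.1 (List.mem_of_mem_head? ha)
  have haS : a ∈ S := of_decide_eq_true haS
  have haz : a ≠ z := fun h => hzA (h ▸ haA)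
  have hfilter : A.filter (· ∈ insert x (S.erase z)) = A.filter (· ∈ S) :=
    List.filter_congr fun c hc => by
      have hcx : c ≠ x := fun h => hxA (h ▸ hc)
      have hcz : c ≠ z := fun h => hzA (h ▸ hc)
      simp [hcx, hcz]
  have hzS' : z ∉ insert x (S.erase z) := by simp [hzx]
  rw [disagreeCount_eq_nonFirstCount hrank.cons_cons_append hV (ranksFirst_cons hzS),
    disagreeCount_eq_nonFirstCount hrank.cons_cons_append hV
      ((ranksFirst_cons_iff_of_notMem hzS' (by simp)).2 (ranksFirst_cons (by simp))),
    disagreeCount_eq_nonFirstCount hrank hV (ranksFirst_append_of_head?_filter ha),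
    disagreeCount_eq_nonFirstCount hrank hV
      (ranksFirst_append_of_head?_filter (hfilter ▸ ha))]
  exact two_mul_nonFirstCount_add_le hV hxz
    (fun c hc hcz => hxJ c (ne_of_mem_of_not_mem hc hxS) hcz) hS hzS hxS haS haz

theorem disagreeCount_add_le_of_mem_of_notMem (hV : ∀ v ∈ V, IsRanking v)
    (hrank : IsRanking (A ++ z :: x :: B)) (hxz : 4 * nn2 V x z ≤ V.card)
    (hxJ : ∀ c, c ≠ x → c ≠ z → 4 * nn2 V c x ≤ V.card)
    (hS : S.card ≤ 3) (hzS : z ∈ S) (hxS : x ∉ S) :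
    disagreeCount (z :: x :: (A ++ B)) V S
        + disagreeCount (z :: x :: (A ++ B)) V (insert x (S.erase z))
      ≤ disagreeCount (A ++ z :: x :: B) V S
        + disagreeCount (A ++ z :: x :: B) V (insert x (S.erase z)) := by
  cases hA : A.filter (· ∈ S) with
  | cons a _ =>
    have := two_mul_disagreeCount_add_le hV hrank hxz hxJ hS hzS hxS (by rw [hA]; rfl)
    omega
  | nil =>
    obtain ⟨-, hxA, -⟩ := hrank.notMem_prefix
    have hA' : A.filter (· ∈ insert x (S.erase z)) = [] := by
      rw [List.filter_eq_nil_iff] at hA ⊢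
      intro c hc
      have hcx : c ≠ x := fun h => hxA (h ▸ hc)
      simpa [hcx] using fun _ => hA c hc
    rw [disagreeCount_congr hrank.cons_cons_append.2 hrank.2
        (filter_cons_cons_append_of_filter_eq_nil hA),
      disagreeCount_congr hrank.cons_cons_append.2 hrank.2
        (filter_cons_cons_append_of_filter_eq_nil hA')]

theorem disagreeCount_le_of_mem_iff (hV : ∀ v ∈ V, IsRanking v)
    (hrank : IsRanking (A ++ z :: x :: B)) (hxz : 4 * nn2 V x z ≤ V.card)
    (hxJ : ∀ c, c ≠ x → c ≠ z → 4 * nn2 V c x ≤ V.card)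
    (hS : S.card ≤ 3) (hzx : z ∈ S ↔ x ∈ S) :
    disagreeCount (z :: x :: (A ++ B)) V S ≤ disagreeCount (A ++ z :: x :: B) V S := by
  obtain ⟨hzA, hxA, hzx'⟩ := hrank.notMem_prefix
  by_cases hzS : z ∈ S
  · cases hA : A.filter (· ∈ S) with
    | nil =>
      exact (disagreeCount_congr hrank.cons_cons_append.2 hrank.2
        (filter_cons_cons_append_of_filter_eq_nil hA)).le
    | cons a _ =>
      have ha : (A.filter (· ∈ S)).head? = some a := by rw [hA]; rfl
      obtain ⟨haA, haS⟩ := List.mem_filter.1 (List.mem_of_mem_head? ha)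
      rw [disagreeCount_eq_nonFirstCount hrank.cons_cons_append hV (ranksFirst_cons hzS),
        disagreeCount_eq_nonFirstCount hrank hV (ranksFirst_append_of_head?_filter ha)]
      exact nonFirstCount_le_of_mem_of_mem hV hxz (fun c _ hcz hcx => hxJ c hcx hcz) hS hzS
        (hzx.1 hzS) hzx' (of_decide_eq_true haS) (fun h => hzA (h ▸ haA))
        (fun h => hxA (h ▸ haA))
  · exact (disagreeCount_congr hrank.cons_cons_append.2 hrank.2
      (filter_cons_cons_append_of_false (by simpa using hzS)
        (by simpa using mt hzx.2 hzS))).le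

theorem disagreeCount_add_map_swap_le (hV : ∀ v ∈ V, IsRanking v)
    (hrank : IsRanking (A ++ z :: x :: B)) (hxz : 4 * nn2 V x z ≤ V.card)
    (hxJ : ∀ c, c ≠ x → c ≠ z → 4 * nn2 V c x ≤ V.card) (hS : S.card ≤ 3) :
    disagreeCount (z :: x :: (A ++ B)) V S
        + disagreeCount (z :: x :: (A ++ B)) V (S.map (Equiv.swap z x).toEmbedding)
      ≤ disagreeCount (A ++ z :: x :: B) V S
        + disagreeCount (A ++ z :: x :: B) V (S.map (Equiv.swap z x).toEmbedding) := by
  by_cases hzx : z ∈ S ↔ x ∈ S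
  · rw [Finset.map_swap_eq_self hzx]
    have := disagreeCount_le_of_mem_iff hV hrank hxz hxJ hS hzx
    omega
  by_cases hzS : z ∈ S
  · rw [Finset.map_swap_eq_insert_erase hzS (fun hxS => hzx (iff_of_true hzS hxS))]
    exact disagreeCount_add_le_of_mem_of_notMem hV hrank hxz hxJ hS hzS
      (fun hxS => hzx (iff_of_true hzS hxS))
  · set T := S.map (Equiv.swap z x).toEmbedding
    have hxS : x ∈ S := by tauto
    have hzT : z ∈ T := by simpa [T, Finset.mem_map_equiv] using hxS
    have hxT : x ∉ T := by simpa [T, Finset.mem_map_equiv] using hzS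
    have hST : insert x (T.erase z) = S := by
      rw [← Finset.map_swap_eq_insert_erase hzT hxT]
      ext c
      simp [T, Finset.mem_map_equiv]
    have := disagreeCount_add_le_of_mem_of_notMem hV hrank hxz hxJ
      (by simpa [T] using hS) hzT hxT
    rw [hST] at this
    omega

end Profile

theorem stmt7_general [Fintype α] [DecidableEq α]
    (V : Multiset (List α)) (hV0 : V ≠ 0) (hV : ∀ v ∈ V, IsRanking v)
    (x z : α)
    (hz : geq V (3/4) z x)
    (hx : ∀ y : α, y ≠ x → y ≠ z → geq V (3/4) x y)
    (A B : List α) (hA : A ≠ [])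
    (hrank : IsRanking (A ++ z :: x :: B)) :
    d3V (z :: x :: (A ++ B)) V < d3V (A ++ z :: x :: B) V := by
  have hxz := four_mul_nn2_le_of_geq hz
  have hxJ c (hcx : c ≠ x) (hcz : c ≠ z) := four_mul_nn2_le_of_geq (hx c hcx hcz)
  obtain ⟨a, A', rfl⟩ := List.exists_cons_of_ne_nil hA
  obtain ⟨hzA, hxA, hzx⟩ := hrank.notMem_prefix
  have hpair : ({z, a} : Finset α).card = 2 :=
    Finset.card_pair fun h => hzA (h ▸ List.mem_cons_self)
  have hxS : x ∉ ({z, a} : Finset α) := by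
    simp only [Finset.mem_insert, Finset.mem_singleton, not_or]
    exact ⟨hzx.symm, fun h => hxA (h ▸ List.mem_cons_self)⟩
  have hstrict := two_mul_disagreeCount_add_le hV hrank hxz hxJ (by omega) (by simp) hxS
    (a := a) (by simp)
  rw [hpair, ← Finset.map_swap_eq_insert_erase (by simp) hxS] at hstrict
  rw [d3V_eq_sum, d3V_eq_sum]
  refine Finset.sum_lt_sum_of_involutive (σ := fun S => S.map (Equiv.swap z x).toEmbedding)
    (fun S => by ext c; simp [Finset.mem_map_equiv]) (fun S hS => by simpa using hS)
    (fun S hS => disagreeCount_add_map_swap_le hV hrank hxz hxJ (Finset.mem_filter.1 hS).2)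
    ⟨{z, a}, by simp [hpair], ?_⟩
  have hN := Multiset.card_pos.2 hV0
  omega

theorem stmt7 [Fintype α] [DecidableEq α]
    (V : Multiset (List α)) (hV0 : V ≠ 0) (hV : ∀ v ∈ V, IsRanking v)
    (x z : α) (hxz : x ≠ z)
    (hz : geq V (3/4) z x)
    (hx : ∀ y : α, y ≠ x → y ≠ z → geq V (3/4) x y)
    (A B : List α) (hA : A ≠ [])
    (hrank : IsRanking (A ++ z :: x :: B)) :
    d3V (z :: x :: (A ++ B)) V < d3V (A ++ z :: x :: B) V :=
  stmt7_general V hV0 hV x z hz hx A B hA hrank
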